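/- arXiv:1608.01239 — 2 statements merged into one kernel-verified Lean document; each statement's English description precedes it below -/
import Mathlib

section
/- Let $\Lambda$ be a finite dimensional Auslander algebra and $I$ an indecomposable injective right $\Lambda$-module. Then $I$ is projective if and only if the projective dimension of its socle is at most 1. -/
universe u

open CategoryTheory

section Defs

variable (R : Type u) [Ring R]

/-- `pdLE R n M` : the module `M` has projective dimension at most `n`. -/
def pdLE : ℕ → ModuleCat.{u} R → Prop
  | 0, M => Module.Projective R M
  | (n+1), M => ∃ (P : ModuleCat.{u} R) (f : P →ₗ[R] M),
      Module.Projective R P ∧ Function.Surjective f ∧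
      pdLE n (ModuleCat.of R (LinearMap.ker f))

/-- The projective dimension of a module, as an element of `ℕ∞` (`⊤` if no
finite projective resolution exists). -/
noncomputable def projDim (M : ModuleCat.{u} R) : ℕ∞ :=
  sInf ((↑) '' {n : ℕ | pdLE R n M})

/-- `idLE R n M` : the module `M` has injective dimension at most `n`. -/
def idLE : ℕ → ModuleCat.{u} R → Prop
  | 0, M => Module.Injective R M
  | (n+1), M => ∃ (I : ModuleCat.{u} R) (f : M →ₗ[R] I),
      Module.Injective R I ∧ Function.Injective f ∧
      idLE n (ModuleCat.of R (I ⧸ LinearMap.range f))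

/-- The injective dimension of a module, as an element of `ℕ∞`. -/
noncomputable def injDim (M : ModuleCat.{u} R) : ℕ∞ :=
  sInf ((↑) '' {n : ℕ | idLE R n M})

/-- The global dimension (computed on finitely generated modules) is at most `n`. -/
def gldimLE (n : ℕ) : Prop :=
  ∀ M : ModuleCat.{u} R, Module.Finite R M → pdLE R n M

/-- The global dimension of `R`, computed on finitely generated modules. -/
noncomputable def globalDim : ℕ∞ :=
  sInf ((↑) '' {n : ℕ | gldimLE R n})

/-- The socle of a module: the sum of all its simple submodules. -/
def socle (M : Type u) [AddCommGroup M] [Module R M] : Submodule R M :=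
  sSup {S : Submodule R M | IsSimpleModule R S}

/-- An algebra is an Auslander algebra if its global dimension is at most `2` and
its dominant dimension is at least `2`, i.e. there is an exact sequence
`0 → R → I₀ → I₁` with `I₀`, `I₁` both projective and injective. -/
def IsAuslander : Prop :=
  gldimLE R 2 ∧
  ∃ (I₀ I₁ : ModuleCat.{u} R) (f : R →ₗ[R] I₀) (g : I₀ →ₗ[R] I₁),
    Module.Injective R I₀ ∧ Module.Projective R I₀ ∧
    Module.Injective R I₁ ∧ Module.Projective R I₁ ∧
    Function.Injective f ∧ LinearMap.ker g = LinearMap.range f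

/-- `f : M →ₗ[R] I` realizes `I` as an injective envelope of `M`: `I` is injective
and `f` is an essential embedding. -/
def IsInjectiveEnvelope {M I : Type u} [AddCommGroup M] [Module R M]
    [AddCommGroup I] [Module R I] (f : M →ₗ[R] I) : Prop :=
  Module.Injective R I ∧ Function.Injective f ∧
    ∀ N : Submodule R I, N ≠ ⊥ → N ⊓ LinearMap.range f ≠ ⊥

end Defs

/-!
An indecomposable injective module is uniform, so over the artinian algebra `Λ` its socle `S`
is simple and essential, i.e. `I` is an injective envelope of `S`.

If `I` is projective, `S` embeds into `Λ`, and since `gl.dim Λ ≤ 2` every submodule of `Λ` has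
projective dimension at most `1`.

Conversely, let `0 → Λ → I₀ → I₁` with `I₀` injective and projective and `I₁` projective. If
`Hom(S, Λ) = 0` then also `Hom(S, I₁) = 0`, which forces `Ext¹(S, Λ) = 0`; when `pd S ≤ 1` a
projective presentation of `S` then splits, making `S` a nonzero projective module without
nonzero maps to `Λ`, which is absurd. So there is a nonzero, hence injective, map `S → Λ ⊆ I₀`.
It extends to an embedding of the envelope `I` into `I₀`, which splits because `I` is
injective: `I` is a direct summand of the projective module `I₀`.
-/

open Function LinearMap

section ProjectiveDimension

variable {R : Type u} [Ring R] {A B M N : Type u} [AddCommGroup A] [AddCommGroup B]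
  [AddCommGroup M] [AddCommGroup N] [Module R A] [Module R B] [Module R M] [Module R N]

noncomputable def pullbackEquivKerProd {f : A →ₗ[R] M} {g : B →ₗ[R] M} {l : B →ₗ[R] A}
    (hl : ∀ b, f (l b) = g b) :
    (ker f × B) ≃ₗ[R] eqLocus (f ∘ₗ fst R A B) (g ∘ₗ snd R A B) where
  toFun x := ⟨(x.1 + l x.2, x.2), by simp [hl, mem_ker.mp x.1.2]⟩
  invFun x := (⟨x.1.1 - l x.1.2, by simp [hl, show f x.1.1 = g x.1.2 from x.2]⟩, x.1.2)
  map_add' x y := by ext <;> simp; abel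
  map_smul' r x := by ext <;> simp
  left_inv x := by ext <;> simp
  right_inv x := by ext <;> simp

def eqLocusSwap (f : A →ₗ[R] M) (g : B →ₗ[R] M) :
    eqLocus (f ∘ₗ fst R A B) (g ∘ₗ snd R A B) ≃ₗ[R] eqLocus (g ∘ₗ fst R B A) (f ∘ₗ snd R B A) where
  toFun x := ⟨x.1.swap, x.2.symm⟩
  invFun x := ⟨x.1.swap, x.2.symm⟩
  map_add' _ _ := rfl
  map_smul' _ _ := rfl
  left_inv _ := rfl
  right_inv _ := rfl

theorem schanuel [Module.Projective R A] [Module.Projective R B] {f : A →ₗ[R] M}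
    {g : B →ₗ[R] M} (hf : Surjective f) (hg : Surjective g) :
    Nonempty ((ker f × B) ≃ₗ[R] (ker g × A)) := by
  obtain ⟨l, hl⟩ := Module.projective_lifting_property f g hf
  obtain ⟨l', hl'⟩ := Module.projective_lifting_property g f hg
  exact ⟨pullbackEquivKerProd (LinearMap.congr_fun hl) ≪≫ₗ eqLocusSwap f g ≪≫ₗ
    (pullbackEquivKerProd (LinearMap.congr_fun hl')).symm⟩

theorem pdLE_congr (e : A ≃ₗ[R] B) :
    ∀ {n : ℕ}, pdLE R n (ModuleCat.of R A) → pdLE R n (ModuleCat.of R B)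
  | 0, h => by
    have : Module.Projective R A := h
    exact Module.Projective.of_equiv e
  | _ + 1, ⟨P, f, hP, hf, hK⟩ => by
    refine ⟨P, e.toLinearMap ∘ₗ f, hP, e.surjective.comp hf, ?_⟩
    rwa [ker_comp, LinearEquiv.ker, Submodule.comap_bot]

noncomputable def kerProdEquivKerFstComp {T : Type u} [AddCommGroup T] [Module R T]
    {t : T →ₗ[R] A × N} {s : N →ₗ[R] T} (hs : ∀ n, t (s n) = (0, n)) :
    (ker t × N) ≃ₗ[R] ker (fst R A N ∘ₗ t) where
  toFun x := ⟨x.1 + s x.2, by simp [hs, mem_ker.mp x.1.2]⟩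
  invFun x := (⟨x.1 - s (t x.1).2, by
    have hx : (t x.1).1 = 0 := x.2
    ext <;> simp [hs, hx]⟩, (t x.1).2)
  map_add' x y := by ext; simp; abel
  map_smul' r x := by ext; simp
  left_inv x := by ext <;> simp [hs, mem_ker.mp x.1.2]
  right_inv x := by ext; simp

def kerProdMapIdEquiv {P : Type u} [AddCommGroup P] [Module R P] (f : P →ₗ[R] A) :
    ker (f.prodMap (LinearMap.id : N →ₗ[R] N)) ≃ₗ[R] ker f where
  toFun x := ⟨x.1.1, congrArg Prod.fst (mem_ker.mp x.2)⟩
  invFun a := ⟨(a, 0), by simp⟩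
  map_add' _ _ := rfl
  map_smul' _ _ := rfl
  left_inv x := by
    have hx : x.1.2 = 0 := congrArg Prod.snd (mem_ker.mp x.2)
    ext <;> simp [hx]
  right_inv _ := rfl

theorem pdLE_prod_iff [Module.Projective R N] :
    ∀ {n : ℕ} {A : Type u} [AddCommGroup A] [Module R A],
      pdLE R n (ModuleCat.of R (A × N)) ↔ pdLE R n (ModuleCat.of R A)
  | 0, A, _, _ => by
    refine ⟨fun h => ?_, fun h => ?_⟩
    · have : Module.Projective R (A × N) := h
      exact Module.Projective.of_split (inl R A N) (fst R A N) rfl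
    · have : Module.Projective R A := h
      exact (inferInstance : Module.Projective R (A × N))
  | n + 1, A, _, _ => by
    refine ⟨fun ⟨T, t, hT, ht, hK⟩ => ?_, fun ⟨P, f, hP, hf, hK⟩ => ?_⟩
    · obtain ⟨s, hs⟩ := Module.projective_lifting_property t (inr R A N) ht
      refine ⟨T, fst R A N ∘ₗ t, hT, Prod.fst_surjective.comp ht, ?_⟩
      exact pdLE_congr (kerProdEquivKerFstComp (LinearMap.congr_fun hs)) (pdLE_prod_iff.mpr hK)
    · have : Module.Projective R P := hP
      refine ⟨ModuleCat.of R (P × N), f.prodMap LinearMap.id, inferInstance,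
        Prod.map_surjective.mpr ⟨hf, surjective_id⟩, ?_⟩
      exact pdLE_congr (kerProdMapIdEquiv f).symm hK

theorem pdLE_ker_of_pdLE_succ {P : Type u} [AddCommGroup P] [Module R P] [Module.Projective R P]
    {p : P →ₗ[R] M} (hp : Surjective p) {n : ℕ} (h : pdLE R (n + 1) (ModuleCat.of R M)) :
    pdLE R n (ModuleCat.of R (ker p)) := by
  obtain ⟨Q, q, hQ, hq, hK⟩ := h
  have : Module.Projective R Q := hQ
  obtain ⟨e⟩ := schanuel hq hp
  exact pdLE_prod_iff.mp (pdLE_congr e (pdLE_prod_iff.mpr hK))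

theorem pdLE_of_gldimLE_succ {n : ℕ} (h : gldimLE R (n + 1)) {P : Type u} [AddCommGroup P]
    [Module R P] [Module.Projective R P] [Module.Finite R P] (N : Submodule R P) :
    pdLE R n (ModuleCat.of R N) :=
  pdLE_congr (LinearEquiv.ofEq _ _ N.ker_mkQ)
    (pdLE_ker_of_pdLE_succ N.mkQ_surjective (h (ModuleCat.of R (P ⧸ N)) inferInstance))

end ProjectiveDimension

section DominantDimension

variable {R : Type u} [Ring R] {M P : Type u} [AddCommGroup M] [AddCommGroup P]
  [Module R M] [Module R P]

-- `Ext¹(M, N) = 0` as soon as `Hom(M, I₁) = 0` for an injective copresentation `0 → N → I₀ → I₁`.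
theorem exists_comp_subtype_eq_of_exact {N I₀ I₁ : Type u} [AddCommGroup N] [AddCommGroup I₀]
    [AddCommGroup I₁] [Module R N] [Module R I₀] [Module R I₁] [Module.Injective R I₀]
    {f : N →ₗ[R] I₀} {g : I₀ →ₗ[R] I₁} (hf : Injective f) (hfg : Exact f g)
    {e : P →ₗ[R] M} (he : Surjective e) (hM : ∀ w : M →ₗ[R] I₁, w = 0) (φ : ker e →ₗ[R] N) :
    ∃ ψ : P →ₗ[R] N, ψ ∘ₗ (ker e).subtype = φ := by
  obtain ⟨χ, hχ⟩ := Module.Injective.extension_property R I₀ _ _ (ker e).subtype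
    (ker e).injective_subtype (f ∘ₗ φ)
  have hχ_ker : ker e ≤ ker (g ∘ₗ χ) := fun x hx => by
    simpa using hfg.apply_apply_eq_zero (φ ⟨x, hx⟩) ▸ congr_arg g (LinearMap.congr_fun hχ ⟨x, hx⟩)
  have hgχ : ∀ x, χ x ∈ range f := fun x => by
    rw [← hfg.linearMap_ker_eq, mem_ker]
    simpa using LinearMap.congr_fun
      (hM ((ker e).liftQ _ hχ_ker ∘ₗ (e.quotKerEquivOfSurjective he).symm.toLinearMap)) (e x)
  refine ⟨(LinearEquiv.ofInjective f hf).symm.toLinearMap ∘ₗ codRestrict _ χ hgχ, ?_⟩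
  ext x
  apply hf
  simpa using LinearMap.congr_fun hχ x

theorem exists_retraction_of_forall_exists_comp_subtype_eq {K : Submodule R P}
    [Module.Projective R K] [Module.Finite R K]
    (h : ∀ φ : K →ₗ[R] R, ∃ ψ : P →ₗ[R] R, ψ ∘ₗ K.subtype = φ) :
    ∃ r : P →ₗ[R] K, r ∘ₗ K.subtype = LinearMap.id := by
  obtain ⟨n, π, hπ⟩ := Module.Finite.exists_fin' R K
  obtain ⟨σ, hσ⟩ := Module.projective_lifting_property π LinearMap.id hπ
  choose τ hτ using fun i => h (proj i ∘ₗ σ)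
  refine ⟨π ∘ₗ LinearMap.pi τ, ?_⟩
  have hτσ : LinearMap.pi τ ∘ₗ K.subtype = σ := by
    ext x i
    exact LinearMap.congr_fun (hτ i) x
  rw [LinearMap.comp_assoc, hτσ, hσ]

theorem projective_of_exists_retraction [Module.Projective R P] {e : P →ₗ[R] M}
    (he : Surjective e) (h : ∃ r : P →ₗ[R] ker e, r ∘ₗ (ker e).subtype = LinearMap.id) :
    Module.Projective R M := by
  obtain ⟨r, hr⟩ := h
  obtain ⟨φ, -, hφ⟩ := (exact_subtype_ker_map e).splitInjectiveEquiv he ⟨r, hr⟩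
  exact Module.Projective.of_split (φ.symm.toLinearMap ∘ₗ inr R _ M) e
    (LinearMap.ext fun m => by simpa using LinearMap.congr_fun hφ (φ.symm (0, m)))

theorem eq_zero_of_forall_dual_eq_zero {Q : Type u} [AddCommGroup Q] [Module R Q]
    [Module.Projective R Q] (hM : ∀ w : M →ₗ[R] R, w = 0) (u : M →ₗ[R] Q) : u = 0 :=
  LinearMap.ext fun x =>
    (Module.forall_dual_apply_eq_zero_iff R (u x)).mp fun d => LinearMap.congr_fun (hM (d ∘ₗ u)) x

theorem projective_of_pdLE_one_of_forall_eq_zero [IsNoetherianRing R] {I₀ I₁ : Type u}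
    [AddCommGroup I₀] [AddCommGroup I₁] [Module R I₀] [Module R I₁] [Module.Injective R I₀]
    {f : R →ₗ[R] I₀} {g : I₀ →ₗ[R] I₁} (hf : Injective f) (hfg : Exact f g)
    [Module.Finite R M] (hM : pdLE R 1 (ModuleCat.of R M)) (hI₁ : ∀ w : M →ₗ[R] I₁, w = 0) :
    Module.Projective R M := by
  obtain ⟨n, e, he⟩ := Module.Finite.exists_fin' R M
  have : Module.Projective R (ker e) := pdLE_ker_of_pdLE_succ he hM
  exact projective_of_exists_retraction he <|
    exists_retraction_of_forall_exists_comp_subtype_eq fun φ =>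
      exists_comp_subtype_eq_of_exact hf hfg he hI₁ φ

theorem exists_dual_ne_zero_of_pdLE_one [IsNoetherianRing R] {I₀ I₁ : Type u}
    [AddCommGroup I₀] [AddCommGroup I₁] [Module R I₀] [Module R I₁] [Module.Injective R I₀]
    [Module.Projective R I₁] {f : R →ₗ[R] I₀} {g : I₀ →ₗ[R] I₁} (hf : Injective f)
    (hfg : Exact f g) [Nontrivial M] [Module.Finite R M] (hM : pdLE R 1 (ModuleCat.of R M)) :
    ∃ w : M →ₗ[R] R, w ≠ 0 := by
  by_contra! hdual
  have := projective_of_pdLE_one_of_forall_eq_zero hf hfg hM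
    (eq_zero_of_forall_dual_eq_zero hdual)
  obtain ⟨x, hx⟩ := exists_ne (0 : M)
  obtain ⟨d, hd⟩ := Module.Projective.exists_dual_ne_zero R hx
  exact hd (by simp [hdual d])

end DominantDimension

theorem IsInjectiveEnvelope.projective {R : Type u} [Ring R] {M I Q : Type u} [AddCommGroup M]
    [AddCommGroup I] [AddCommGroup Q] [Module R M] [Module R I] [Module R Q]
    [Module.Injective R Q] [Module.Projective R Q] {ι : M →ₗ[R] I}
    (hι : IsInjectiveEnvelope R ι) {u : M →ₗ[R] Q} (hu : Injective u) :
    Module.Projective R I := by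
  obtain ⟨hI, hι_inj, hess⟩ := hι
  obtain ⟨v, hv⟩ := Module.Injective.extension_property R Q M I ι hι_inj u
  have hv_inj : Injective v := by
    rw [← ker_eq_bot]
    by_contra hne
    refine hess _ hne (eq_bot_iff.mpr ?_)
    rintro _ ⟨hk, m, rfl⟩
    have : u m = u 0 := by rw [← hv, map_zero]; exact hk
    simp [hu this]
  obtain ⟨r, hr⟩ := Module.Injective.extension_property R I I Q v hv_inj LinearMap.id
  exact Module.Projective.of_split v r hr

section Essential

variable {R : Type u} [Ring R] {I : Type u} [AddCommGroup I] [Module R I]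

def IsEssentialOver (N E : Submodule R I) : Prop :=
  N ≤ E ∧ ∀ x ∈ E, x ≠ 0 → ∃ r : R, r • x ∈ N ∧ r • x ≠ 0

theorem exists_maximal_isEssentialOver (N : Submodule R I) :
    ∃ E, Maximal (IsEssentialOver N) E := by
  obtain ⟨E, -, hE⟩ := zorn_le_nonempty₀ {E | IsEssentialOver N E} (fun c hc hchain E₀ hE₀ => by
    refine ⟨sSup c, ⟨(hc hE₀).1.trans (le_sSup hE₀), fun x hx hx0 => ?_⟩, fun _ => le_sSup⟩
    obtain ⟨E, hEc, hxE⟩ := (Submodule.mem_sSup_of_directed ⟨E₀, hE₀⟩ hchain.directedOn).mp hx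
    exact (hc hEc).2 x hxE hx0) N ⟨le_rfl, fun x hx hx0 => ⟨1, by simpa using hx, by simpa⟩⟩
  exact ⟨E, hE⟩

theorem exists_maximal_disjoint (E : Submodule R I) : ∃ C, Maximal (Disjoint E) C := by
  obtain ⟨C, -, hC⟩ := zorn_le_nonempty₀ {C | Disjoint E C} (fun c hc hchain _ _ =>
    ⟨sSup c, hchain.directedOn.disjoint_sSup_right.mpr fun _ hC => hc hC,
      fun _ => le_sSup⟩) ⊥ disjoint_bot_right
  exact ⟨C, hC⟩

theorem exists_proj_of_disjoint [Module.Injective R I] {E C : Submodule R I} (hEC : Disjoint E C) :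
    ∃ h : I →ₗ[R] I, (∀ x ∈ E, h x = x) ∧ ∀ x ∈ C, h x = 0 := by
  have hinj : Injective (E.subtype.coprod C.subtype) := by
    rw [← ker_eq_bot, ker_coprod_of_disjoint_range _ _ (by simpa using hEC)]
    simp
  obtain ⟨h, hh⟩ := Module.Injective.extension_property R I _ _ _ hinj (E.subtype ∘ₗ fst R E C)
  exact ⟨h, fun x hx => by simpa using LinearMap.congr_fun hh (⟨x, hx⟩, 0),
    fun x hx => by simpa using LinearMap.congr_fun hh (0, ⟨x, hx⟩)⟩

theorem isCompl_of_maximal [Module.Injective R I] {N E C : Submodule R I}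
    (hE : Maximal (IsEssentialOver N) E) (hC : Maximal (Disjoint E) C) : IsCompl E C := by
  obtain ⟨h, hhE, hhC⟩ := exists_proj_of_disjoint hC.1
  -- the maximality of `C` makes every nonzero value of `h` essential over `N`
  have hess : ∀ z, h z ≠ 0 → ∃ r : R, r • h z ∈ N ∧ r • h z ≠ 0 := by
    intro z hz
    have hzC : z ∉ C := fun hzC => hz (hhC z hzC)
    have hnd : ¬Disjoint E (C ⊔ R ∙ z) := fun hd =>
      hzC (hC.2 hd le_sup_left (Submodule.mem_sup_right (Submodule.mem_span_singleton_self z)))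
    obtain ⟨e, heE, he, he0⟩ : ∃ e ∈ E, e ∈ C ⊔ R ∙ z ∧ e ≠ 0 := by
      simpa [Submodule.disjoint_def] using hnd
    obtain ⟨c, hc, _, hs, rfl⟩ := Submodule.mem_sup.mp he
    obtain ⟨s, rfl⟩ := Submodule.mem_span_singleton.mp hs
    have hhe : h (c + s • z) = c + s • z := hhE _ heE
    rw [map_add, hhC c hc, zero_add, map_smul] at hhe
    obtain ⟨t, ht, ht0⟩ := hE.1.2 _ heE he0
    exact ⟨t * s, by rwa [mul_smul, hhe], by rwa [mul_smul, hhe]⟩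
  have hrange : range h = E := by
    have hErange : E ≤ range h := fun x hx => ⟨x, hhE x hx⟩
    refine (hE.2 ⟨hE.1.1.trans hErange, ?_⟩ hErange).antisymm hErange
    rintro _ ⟨z, rfl⟩ hz
    exact hess z hz
  let h' : I →ₗ[R] E := codRestrict E h fun z => hrange ▸ mem_range_self h z
  have hcompl : IsCompl E (ker h') := isCompl_of_proj fun x => Subtype.ext (hhE x x.2)
  have hCker : C ≤ ker h' := fun x hx => Subtype.ext (hhC x hx)
  have hker : ker h' = C := (hC.2 hcompl.disjoint hCker).antisymm hCker
  rwa [hker] at hcompl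

end Essential

section Socle

variable {R : Type u} [Ring R] {I : Type u} [AddCommGroup I] [Module R I]

theorem isInjectiveEnvelope_subtype_of_indecomposable [Module.Injective R I]
    (hindec : ∀ N N' : Submodule R I, IsCompl N N' → N = ⊥ ∨ N' = ⊥) {N : Submodule R I}
    (hN : N ≠ ⊥) : IsInjectiveEnvelope R N.subtype := by
  obtain ⟨E, hE⟩ := exists_maximal_isEssentialOver N
  obtain ⟨C, hC⟩ := exists_maximal_disjoint E
  have hcompl := isCompl_of_maximal hE hC
  have hE_top : E = ⊤ := by
    rcases hindec E C hcompl with hE_bot | hC_bot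
    · exact absurd (eq_bot_iff.mpr (hE_bot ▸ hE.1.1)) hN
    · simpa [hC_bot] using hcompl.sup_eq_top
  refine ⟨inferInstance, N.injective_subtype, fun Y hY => ?_⟩
  obtain ⟨y, hyY, hy0⟩ := Submodule.exists_mem_ne_zero_of_ne_bot hY
  obtain ⟨r, hrN, hr0⟩ := hE.1.2 y (hE_top ▸ Submodule.mem_top) hy0
  rw [Submodule.range_subtype, Submodule.ne_bot_iff]
  exact ⟨r • y, ⟨Y.smul_mem r hyY, hrN⟩, hr0⟩

theorem exists_isSimpleModule_submodule [IsArtinianRing R] [Nontrivial I] :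
    ∃ T : Submodule R I, IsSimpleModule R T := by
  obtain ⟨x, hx⟩ := exists_ne (0 : I)
  let X := R ∙ x
  have : IsArtinian R X := isArtinian_of_fg_of_artinian X (Submodule.fg_span_singleton x)
  have : Nontrivial X := ⟨⟨⟨x, Submodule.mem_span_singleton_self x⟩, 0, by simpa using hx⟩⟩
  obtain ⟨A, hA⟩ := IsAtomic.exists_atom (Submodule R X)
  have : IsSimpleModule R A := isSimpleModule_iff_isAtom.mpr hA
  exact ⟨A.map X.subtype,
    IsSimpleModule.congr (Submodule.equivMapOfInjective _ X.injective_subtype A).symm⟩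

theorem socle_eq_of_isInjectiveEnvelope {T : Submodule R I} [hT : IsSimpleModule R T]
    (hT_env : IsInjectiveEnvelope R T.subtype) : socle R I = T := by
  refine (sSup_le fun S hS => ?_).antisymm (le_sSup hT)
  have hS_atom : IsAtom S := isSimpleModule_iff_isAtom.mp hS
  have hST : S ⊓ T ≠ ⊥ := by simpa using hT_env.2.2 S hS_atom.1
  exact inf_eq_left.mp ((hS_atom.le_iff.mp inf_le_left).resolve_left hST)

end Socle

/-- Over a finite dimensional Auslander algebra, an indecomposable injective module is
projective iff the projective dimension of its socle is at most `1`. -/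
theorem stmt_8 (k Λ : Type u) [Field k] [Ring Λ] [Algebra k Λ] [FiniteDimensional k Λ]
    (hΛ : IsAuslander Λ)
    (I : Type u) [AddCommGroup I] [Module Λ I]
    (hInj : Module.Injective Λ I) (hne : Nontrivial I)
    (hindec : ∀ N N' : Submodule Λ I, IsCompl N N' → N = ⊥ ∨ N' = ⊥) :
    Module.Projective Λ I ↔ pdLE Λ 1 (ModuleCat.of Λ ↥(socle Λ I)) := by
  obtain ⟨hgl, I₀, I₁, f, g, hI₀_inj, hI₀_proj, -, hI₁_proj, hf, hfg⟩ := hΛ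
  have : IsArtinianRing Λ := IsArtinianRing.of_finite k Λ
  have : IsNoetherianRing Λ := isNoetherian_of_tower k inferInstance
  obtain ⟨T, hT⟩ := exists_isSimpleModule_submodule (R := Λ) (I := I)
  have hT_env := isInjectiveEnvelope_subtype_of_indecomposable hindec
    (isSimpleModule_iff_isAtom.mp hT).1
  rw [socle_eq_of_isInjectiveEnvelope hT_env]
  have : Nontrivial T := IsSimpleModule.nontrivial Λ T
  obtain ⟨x, hx⟩ := exists_ne (0 : T)
  constructor
  · intro hP
    obtain ⟨d, hd⟩ := Module.Projective.exists_dual_ne_zero Λ (Subtype.coe_injective.ne hx)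
    have hw : Injective (d ∘ₗ T.subtype) :=
      injective_of_ne_zero fun h0 => hd (by simpa using LinearMap.congr_fun h0 x)
    exact pdLE_congr (LinearEquiv.ofInjective _ hw).symm (pdLE_of_gldimLE_succ hgl (range _))
  · intro hpd
    have : Module.Finite Λ T :=
      Module.Finite.of_surjective _ (IsSimpleModule.toSpanSingleton_surjective Λ hx)
    obtain ⟨w, hw⟩ := exists_dual_ne_zero_of_pdLE_one hf (exact_iff.mpr hfg) hpd
    exact hT_env.projective (u := f ∘ₗ w) (hf.comp (injective_of_ne_zero hw))
end

section
/- Let $\Lambda$ be a finite dimensional algebra with global dimension 2, and let $0 \to \Lambda \xrightarrow{f} I_0$ with $I_0$ the injective envelope of $\Lambda$ and $I_0$ projective. Then the projective dimension of the socle of $\mathrm{Im}\,f$'s cokernel, i.e., $\mathrm{pd}_\Lambda(\mathrm{soc}(I_0/\Lambda))$, is at most 1. -/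
universe u

open CategoryTheory

/-!
Put `C = I₀ ⧸ Λ`. Since `Λ` and `I₀` are projective, `pd C ≤ 1`, and for any submodule `S ≤ C`
one has `pd S ≤ max (pd C) (pd (C ⧸ S) - 1)`. As `Λ → I₀` is essential, `I₀` embeds into a
finite free module, so `C ⧸ soc C` is finitely generated and has `pd ≤ 2` by the global
dimension hypothesis; hence `pd (soc C) ≤ 1`.

The inequality for `S` is realised by an explicit resolution: given `π : I ↠ C` with projective
kernel and `g : P ↠ C ⧸ S`, lift `g` to `ρ : P → C`. The kernel `W` of `π + ρ : I × P → C` is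
projective (an extension of `P` by `ker π`), the preimage `X` of `S` has `pd ≤ 1` (an extension of
`I` by `ker g`), and `S ≅ X ⧸ W`.
-/
open Function LinearMap

section Resolutions

variable {R : Type u} [Ring R] {K M N : Type u} [AddCommGroup K] [Module R K]
  [AddCommGroup M] [Module R M] [AddCommGroup N] [Module R N]

noncomputable def Function.Exact.linearEquivKer {i : K →ₗ[R] M} {g : M →ₗ[R] N} (hex : Exact i g)
    (hi : Injective i) : K ≃ₗ[R] ker g :=
  (LinearEquiv.ofInjective i hi).trans (LinearEquiv.ofEq _ _ hex.linearMap_ker_eq.symm)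

theorem LinearMap.exact_inclusion_restrict (f : M →ₗ[R] N) {p : Submodule R M}
    {q : Submodule R N} (hf : ∀ x ∈ p, f x ∈ q) (hle : ker f ≤ p) :
    Exact (Submodule.inclusion hle) (f.restrict hf) := by
  rintro ⟨x, hx⟩
  simp only [Set.mem_range, Subtype.ext_iff, Submodule.coe_inclusion, Subtype.exists,
    exists_prop, exists_eq_right, ZeroMemClass.coe_zero, coe_restrict_apply, mem_ker]

theorem Module.Projective.of_exact {i : K →ₗ[R] M} {g : M →ₗ[R] N} (hex : Exact i g)
    (hi : Function.Injective i) (hg : Surjective g) [Module.Projective R K]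
    [Module.Projective R N] : Module.Projective R M := by
  obtain ⟨s, hs⟩ := g.exists_rightInverse_of_surjective (range_eq_top.mpr hg)
  exact .of_equiv (hex.splitSurjectiveEquiv hi ⟨s, hs⟩).1.symm

theorem pdLE_of_linearEquiv {n : ℕ} (e : M ≃ₗ[R] N) (h : pdLE R n (ModuleCat.of R M)) :
    pdLE R n (ModuleCat.of R N) := by
  cases n with
  | zero =>
    have : Module.Projective R M := h
    exact Module.Projective.of_equiv e
  | succ n =>
    obtain ⟨P, p, hP, hp, hK⟩ := h
    exact ⟨P, e.toLinearMap ∘ₗ p, hP, e.surjective.comp hp, by rwa [LinearEquiv.ker_comp]⟩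

theorem pdLE_one_of_exact {P : Type u} [AddCommGroup P] [Module R P] {i : K →ₗ[R] P}
    {g : P →ₗ[R] N} (hex : Exact i g) (hi : Injective i) (hg : Surjective g)
    [Module.Projective R K] [Module.Projective R P] : pdLE R 1 (ModuleCat.of R N) :=
  ⟨ModuleCat.of R P, g, ‹_›, hg, Module.Projective.of_equiv (hex.linearEquivKer hi)⟩

theorem pdLE_one_of_exact_of_projective_right {i : K →ₗ[R] M} {g : M →ₗ[R] N} (hex : Exact i g)
    (hi : Injective i) (hg : Surjective g) [Module.Projective R N]
    (hK : pdLE R 1 (ModuleCat.of R K)) : pdLE R 1 (ModuleCat.of R M) := by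
  obtain ⟨P, p, hP, hp, hker⟩ := hK
  have : Module.Projective R (ker p) := hker
  obtain ⟨s, hs⟩ := g.exists_rightInverse_of_surjective (range_eq_top.mpr hg)
  let e : M ≃ₗ[R] K × N := (hex.splitSurjectiveEquiv hi ⟨s, hs⟩).1
  -- `P × N ↠ K × N` has kernel `ker p × 0`.
  refine pdLE_of_linearEquiv e.symm (pdLE_one_of_exact (i := inl R P N ∘ₗ (ker p).subtype)
    (g := p.prodMap id) ?_ (inl_injective.comp (ker p).injective_subtype)
    (hp.prodMap surjective_id))
  rintro ⟨a, y⟩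
  simp [Prod.ext_iff, eq_comm]

theorem pdLE_one_of_exact_of_projective_left {i : K →ₗ[R] M} {g : M →ₗ[R] N} (hex : Exact i g)
    (hi : Injective i) (hg : Surjective g) [Module.Projective R K]
    (hM : pdLE R 1 (ModuleCat.of R M)) : pdLE R 1 (ModuleCat.of R N) := by
  obtain ⟨P, p, hP, hp, hker⟩ := hM
  have : Module.Projective R (ker p) := hker
  have : Module.Projective R (ker g) := .of_equiv (hex.linearEquivKer hi)
  have hle : ker p ≤ ker (g ∘ₗ p) := ker_le_ker_comp p g
  have hr : Surjective (p.restrict (p := ker (g ∘ₗ p)) (q := ker g) fun _ ha => ha) := by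
    rintro ⟨m, hm⟩
    obtain ⟨a, rfl⟩ := hp m
    exact ⟨⟨a, hm⟩, rfl⟩
  have : Module.Projective R (ker (g ∘ₗ p)) :=
    .of_exact (p.exact_inclusion_restrict _ hle) (Submodule.inclusion_injective hle) hr
  exact ⟨P, g ∘ₗ p, hP, hg.comp hp, this⟩

end Resolutions

section Pullback

variable {R : Type u} [Ring R] {I P C : Type u} [AddCommGroup I] [Module R I]
  [AddCommGroup P] [Module R P] [AddCommGroup C] [Module R C] (π : I →ₗ[R] C) (ρ : P →ₗ[R] C)

theorem projective_ker_coprod (hπ : Surjective π) [Module.Projective R (ker π)]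
    [Module.Projective R P] : Module.Projective R (ker (π.coprod ρ)) := by
  let i : ker π →ₗ[R] ker (π.coprod ρ) :=
    (inl R I P ∘ₗ (ker π).subtype).codRestrict _ fun a => by simp
  refine .of_exact (i := i) (g := snd R I P ∘ₗ (ker (π.coprod ρ)).subtype) ?_ ?_ ?_
  · rintro ⟨⟨x, p⟩, h⟩
    constructor
    · rintro (rfl : p = 0)
      exact ⟨⟨x, by simpa using h⟩, rfl⟩
    · rintro ⟨a, ha⟩
      exact (congrArg (fun z : ker (π.coprod ρ) => (z : I × P).2) ha).symm
  · intro a b hab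
    exact Subtype.ext (congrArg (fun z : ker (π.coprod ρ) => (z : I × P).1) hab)
  · intro p
    obtain ⟨x, hx⟩ := hπ (-ρ p)
    exact ⟨⟨(x, p), by simp [hx]⟩, rfl⟩

theorem pdLE_one_comap_coprod (S : Submodule R C) (hρ : Surjective (S.mkQ ∘ₗ ρ))
    [Module.Projective R I] (hK : pdLE R 1 (ModuleCat.of R (ker (S.mkQ ∘ₗ ρ)))) :
    pdLE R 1 (ModuleCat.of R (S.comap (π.coprod ρ))) := by
  let i : ker (S.mkQ ∘ₗ ρ) →ₗ[R] S.comap (π.coprod ρ) :=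
    (inr R I P ∘ₗ (ker (S.mkQ ∘ₗ ρ)).subtype).codRestrict _ fun p => by
      simpa using (Submodule.Quotient.mk_eq_zero S).mp (mem_ker.mp p.2)
  refine pdLE_one_of_exact_of_projective_right (i := i)
    (g := fst R I P ∘ₗ (S.comap (π.coprod ρ)).subtype) ?_ ?_ ?_ hK
  · rintro ⟨⟨x, p⟩, h⟩
    constructor
    · rintro (rfl : x = 0)
      have hp : ρ p ∈ S := by simpa using h
      exact ⟨⟨p, (Submodule.Quotient.mk_eq_zero S).mpr hp⟩, rfl⟩
    · rintro ⟨a, ha⟩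
      exact (congrArg (fun z : S.comap (π.coprod ρ) => (z : I × P).1) ha).symm
  · intro a b hab
    exact Subtype.ext (congrArg (fun z : S.comap (π.coprod ρ) => (z : I × P).2) hab)
  · intro x
    obtain ⟨p, hp⟩ := hρ (-S.mkQ (π x))
    have hp' : Submodule.Quotient.mk (ρ p) = -Submodule.Quotient.mk (p := S) (π x) := hp
    refine ⟨⟨(x, p), ?_⟩, rfl⟩
    rw [Submodule.mem_comap, coprod_apply, ← Submodule.Quotient.mk_eq_zero,
      Submodule.Quotient.mk_add, hp', add_neg_cancel]

end Pullback

theorem pdLE_one_submodule_of_pdLE_two_quotient {R C : Type u} [Ring R] [AddCommGroup C]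
    [Module R C] (S : Submodule R C) (hC : pdLE R 1 (ModuleCat.of R C))
    (hQ : pdLE R 2 (ModuleCat.of R (C ⧸ S))) : pdLE R 1 (ModuleCat.of R S) := by
  obtain ⟨I, π, hI, hπ, hA⟩ := hC
  obtain ⟨P, g, hP, hg, hK⟩ := hQ
  have : Module.Projective R (ker π) := hA
  obtain ⟨ρ, rfl⟩ := Module.projective_lifting_property S.mkQ g S.mkQ_surjective
  have : Module.Projective R (ker (π.coprod ρ)) := projective_ker_coprod π ρ hπ
  have hle : ker (π.coprod ρ) ≤ S.comap (π.coprod ρ) := fun z hz => by simp [mem_ker.mp hz]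
  refine pdLE_one_of_exact_of_projective_left
    ((π.coprod ρ).exact_inclusion_restrict (fun _ h => h) hle)
    (Submodule.inclusion_injective hle) ?_ (pdLE_one_comap_coprod π ρ S hg hK)
  rintro ⟨c, hc⟩
  obtain ⟨x, rfl⟩ := hπ c
  exact ⟨⟨(x, 0), by simpa using hc⟩, Subtype.ext (by simp)⟩

section Envelope

variable {R I : Type u} [Ring R] [AddCommGroup I] [Module R I]

theorem injective_of_injective_comp_of_essential {M N : Type u} [AddCommGroup M] [Module R M]
    [AddCommGroup N] [Module R N] {f : M →ₗ[R] I}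
    (hess : ∀ K : Submodule R I, K ≠ ⊥ → K ⊓ range f ≠ ⊥) {g : I →ₗ[R] N}
    (hg : Injective (g ∘ₗ f)) : Injective g := by
  rw [← ker_eq_bot]
  by_contra h
  refine hess _ h (eq_bot_iff.mpr ?_)
  rintro _ ⟨hx, a, rfl⟩
  rw [(injective_iff_map_eq_zero _).mp hg a hx, map_zero]
  exact zero_mem _

theorem Module.Finite.of_projective_of_essential [IsNoetherianRing R] [Module.Projective R I]
    {f : R →ₗ[R] I} (hf : Function.Injective f)
    (hess : ∀ K : Submodule R I, K ≠ ⊥ → K ⊓ LinearMap.range f ≠ ⊥) :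
    Module.Finite R I := by
  obtain ⟨s, hs⟩ := Module.projective_def.mp ‹_›
  -- `s` embeds `I` in a free module; on `range f` only the coordinates in the support of
  -- `s (f 1)` can be nonzero, so projecting onto them is injective on `range f`, hence on `I`.
  let σ := (s (f 1)).support
  let g : I →ₗ[R] σ → R := LinearMap.pi fun j => Finsupp.lapply (j : I) ∘ₗ s
  refine .of_injective g (injective_of_injective_comp_of_essential hess ?_)
  refine (injective_iff_map_eq_zero _).mpr fun a ha => hf ?_
  have hsf : s (f a) = a • s (f 1) := by rw [← map_smul, ← map_smul, smul_eq_mul, mul_one]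
  have hs0 : s (f a) = 0 := by
    ext j
    by_cases hj : j ∈ σ
    · exact congrFun ha ⟨j, hj⟩
    · simp [hsf, Finsupp.notMem_support_iff.mp hj]
  rw [← hs (f a), hs0, map_zero, map_zero]

end Envelope

theorem gldimLE_of_globalDim_eq {R : Type u} [Ring R] {n : ℕ} (h : globalDim R = n) :
    gldimLE R n := by
  have hne : ((↑) '' {m : ℕ | gldimLE R m} : Set ℕ∞).Nonempty :=
    Set.nonempty_iff_ne_empty.mpr fun he => by simp [globalDim, he] at h
  obtain ⟨m, hm, hmn⟩ := csInf_mem hne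
  rwa [← Nat.cast_inj.mp (hmn.trans h)]

/-- Let `Λ` be finite dimensional of global dimension `2`, and let `f : Λ → I₀` be an
injective envelope of the regular module with `I₀` projective.  Then the socle of the
cokernel `I₀/Λ` has projective dimension at most `1`. -/
theorem stmt_14 (k Λ : Type u) [Field k] [Ring Λ] [Algebra k Λ] [FiniteDimensional k Λ]
    (hgl : globalDim Λ = 2)
    (I₀ : Type u) [AddCommGroup I₀] [Module Λ I₀]
    (f : Λ →ₗ[Λ] I₀) (henv : IsInjectiveEnvelope Λ f)
    (hproj : Module.Projective Λ I₀) :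
    pdLE Λ 1 (ModuleCat.of Λ ↥(socle Λ (I₀ ⧸ LinearMap.range f))) := by
  obtain ⟨-, hf, hess⟩ := henv
  have : IsNoetherianRing Λ := .of_finite k Λ
  have : Module.Finite Λ I₀ := .of_projective_of_essential hf hess
  have hC : pdLE Λ 1 (ModuleCat.of Λ (I₀ ⧸ range f)) :=
    pdLE_one_of_exact (exact_map_mkQ_range f) hf (Submodule.mkQ_surjective _)
  exact pdLE_one_submodule_of_pdLE_two_quotient _ hC
    (gldimLE_of_globalDim_eq (n := 2) hgl _ inferInstance)
end
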